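/- arXiv:2505.24050 — 5 statements merged into one kernel-verified Lean document; each statement's English description precedes it below -/
import Mathlib

section
/- Let k ≥ 2 and let t₁, …, t_k be positive integers. Then there exists a family (u_S) of positive integers, indexed by the nonempty subsets S of {1, …, k}, such that (a) for every nonempty S ⊆ {1, …, k}, gcd{t_i : i ∈ S} = ∏_{T ⊇ S, T nonempty} u_T, and (b) lcm(t₁, …, t_k) = ∏_{S nonempty} u_S. -/
/-!
Every `n ≠ 0` is the product of `q.minFac` over the prime powers `q ∣ n` (the multiplicative
form of `∑ d ∣ n, Λ d = log n`). Sort the prime powers dividing `lcm t` by their type, the set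
of indices `i` with `q ∣ t i`, and let `u T` collect the prime powers of type `T`. A prime
power divides `S.gcd t` iff its type contains `S`, and it divides `lcm t` iff its type is
nonempty.
-/

open Finset

theorem Nat.prod_minFac_divisors_filter_isPrimePow {n : ℕ} (hn : n ≠ 0) :
    ∏ q ∈ n.divisors with IsPrimePow q, q.minFac = n := by
  have hlog : Real.log (∏ q ∈ n.divisors with IsPrimePow q, q.minFac : ℕ) = Real.log n := by
    rw [Nat.cast_prod, Real.log_prod fun q _ => Nat.cast_ne_zero.mpr q.minFac_pos.ne',
      ← ArithmeticFunction.vonMangoldt_sum, sum_filter]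
    rfl
  have hprod : 0 < ∏ q ∈ n.divisors with IsPrimePow q, q.minFac :=
    prod_pos fun q _ => q.minFac_pos
  exact_mod_cast Real.log_injOn_pos (Set.mem_Ioi.mpr (mod_cast hprod))
    (Set.mem_Ioi.mpr (mod_cast Nat.pos_of_ne_zero hn)) hlog

theorem IsPrimePow.dvd_finset_lcm_iff {ι : Type*} {s : Finset ι} {f : ι → ℕ}
    (hf : ∀ i ∈ s, f i ≠ 0) {q : ℕ} (hq : IsPrimePow q) :
    q ∣ s.lcm f ↔ ∃ i ∈ s, q ∣ f i := by
  obtain ⟨p, a, hp, ha, rfl⟩ := (isPrimePow_nat_iff q).mp hq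
  rw [hp.pow_dvd_iff_le_factorization (lcm_ne_zero_iff.mpr hf), factorization_lcm hf,
    Finset.le_sup_iff ha]
  exact exists_congr fun i =>
    and_congr_right fun hi => (hp.pow_dvd_iff_le_factorization (hf i hi)).symm

section

variable {ι : Type*} [Fintype ι] [DecidableEq ι] (t : ι → ℕ)

def dvdIndices (q : ℕ) : Finset ι := {i | q ∣ t i}

def lcmGcdFactor (T : Finset ι) : ℕ :=
  ∏ q ∈ (univ.lcm t).divisors with IsPrimePow q ∧ dvdIndices t q = T, q.minFac

theorem lcmGcdFactor_pos (T : Finset ι) : 0 < lcmGcdFactor t T :=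
  prod_pos fun q _ => q.minFac_pos

theorem prod_lcmGcdFactor (𝒯 : Finset (Finset ι)) :
    ∏ T ∈ 𝒯, lcmGcdFactor t T =
      ∏ q ∈ (univ.lcm t).divisors with IsPrimePow q ∧ dvdIndices t q ∈ 𝒯, q.minFac := by
  simp only [lcmGcdFactor, ← filter_filter, prod_fiberwise_eq_prod_filter]

variable {t}

theorem gcd_eq_prod_lcmGcdFactor (ht : ∀ i, t i ≠ 0) {S : Finset ι} (hS : S.Nonempty) :
    S.gcd t = ∏ T ∈ univ with S ⊆ T ∧ T.Nonempty, lcmGcdFactor t T := by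
  rw [prod_lcmGcdFactor]
  have hgcd : S.gcd t ≠ 0 := gcd_ne_zero_iff.mpr (hS.exists_mem.imp fun i hi => ⟨hi, ht i⟩)
  conv_lhs => rw [← Nat.prod_minFac_divisors_filter_isPrimePow hgcd]
  refine prod_congr ?_ fun _ _ => rfl
  ext q
  simp only [mem_filter, Nat.mem_divisors, mem_univ, true_and, dvdIndices, subset_iff,
    Finset.dvd_gcd_iff]
  have hlcm : univ.lcm t ≠ 0 := lcm_ne_zero_iff.mpr fun i _ => ht i
  obtain ⟨i, hi⟩ := hS
  constructor
  · rintro ⟨⟨hdvd, -⟩, hq⟩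
    exact ⟨⟨(hdvd i hi).trans (dvd_lcm (mem_univ i)), hlcm⟩, hq, hdvd,
      ⟨i, by simpa using hdvd i hi⟩⟩
  · rintro ⟨-, hq, hdvd, -⟩
    exact ⟨⟨hdvd, hgcd⟩, hq⟩

theorem lcm_eq_prod_lcmGcdFactor (ht : ∀ i, t i ≠ 0) :
    univ.lcm t = ∏ T ∈ univ with T.Nonempty, lcmGcdFactor t T := by
  rw [prod_lcmGcdFactor]
  have hlcm : univ.lcm t ≠ 0 := lcm_ne_zero_iff.mpr fun i _ => ht i
  conv_lhs => rw [← Nat.prod_minFac_divisors_filter_isPrimePow hlcm]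
  refine prod_congr (filter_congr fun q hq => ?_) fun _ _ => rfl
  simp only [mem_filter, mem_univ, true_and, dvdIndices, filter_nonempty_iff]
  refine ⟨fun hq' => ⟨hq', ?_⟩, And.left⟩
  simpa using (hq'.dvd_finset_lcm_iff fun i _ => ht i).mp (Nat.dvd_of_mem_divisors hq)

end

theorem lcm_gcd_factorization_general (k : ℕ) (t : Fin k → ℕ)
    (ht : ∀ i, 0 < t i) :
    ∃ u : Finset (Fin k) → ℕ,
      (∀ S : Finset (Fin k), S.Nonempty → 0 < u S) ∧
      (∀ S : Finset (Fin k), S.Nonempty →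
        S.gcd t = ∏ T ∈ Finset.univ.filter
          (fun T : Finset (Fin k) => S ⊆ T ∧ T.Nonempty), u T) ∧
      Finset.univ.lcm t = ∏ S ∈ Finset.univ.filter
          (fun S : Finset (Fin k) => S.Nonempty), u S :=
  have ht' : ∀ i, t i ≠ 0 := fun i => (ht i).ne'
  ⟨lcmGcdFactor t, fun S _ => lcmGcdFactor_pos t S, fun _ hS => gcd_eq_prod_lcmGcdFactor ht' hS,
    lcm_eq_prod_lcmGcdFactor ht'⟩

theorem lcm_gcd_factorization (k : ℕ) (hk : 2 ≤ k) (t : Fin k → ℕ)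
    (ht : ∀ i, 0 < t i) :
    ∃ u : Finset (Fin k) → ℕ,
      (∀ S : Finset (Fin k), S.Nonempty → 0 < u S) ∧
      (∀ S : Finset (Fin k), S.Nonempty →
        S.gcd t = ∏ T ∈ Finset.univ.filter
          (fun T : Finset (Fin k) => S ⊆ T ∧ T.Nonempty), u T) ∧
      Finset.univ.lcm t = ∏ S ∈ Finset.univ.filter
          (fun S : Finset (Fin k) => S.Nonempty), u S :=
  lcm_gcd_factorization_general k t ht
end

section
/- Let k ≥ 2 and let m = (m_A : A ⊆ {1,…,k}, |A| = 2) be a tuple of positive integers satisfying the consistency condition: gcd(m_{A₁}, m_{B₁}) = gcd(m_{A₂}, m_{B₂}) for all two-element subsets A₁, B₁, A₂, B₂ of {1,…,k} with A₁ ∪ B₁ = A₂ ∪ B₂. For each i ∈ {1,…,k} set M_i := lcm{m_A : A ⊆ {1,…,k}, |A| = 2, i ∈ A}. Then for all 1 ≤ i < j ≤ k, gcd(M_i, M_j) = m_{{i,j}}. -/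
/-! Since gcd distributes over lcm, gcd(M_i, M_j) divides the lcm of the numbers gcd(m_A, m_B)
with i ∈ A and j ∈ B. Each of these equals gcd(m_{i,j}, m_C) for a pair C with
{i, j} ∪ C = A ∪ B, by the consistency condition, and hence divides m_{i,j}. -/

open Finset

theorem Nat.gcd_lcm_dvd_lcm_gcd (x u v : ℕ) : gcd x (lcm u v) ∣ lcm (gcd x u) (gcd x v) := by
  rcases eq_or_ne x 0 with rfl | hx
  · simp
  rcases eq_or_ne u 0 with rfl | hu
  · simpa using Nat.dvd_lcm_left x (gcd x v)
  rcases eq_or_ne v 0 with rfl | hv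
  · simpa using Nat.dvd_lcm_right (gcd x u) x
  rw [← factorization_le_iff_dvd (gcd_ne_zero_left hx)
    (lcm_ne_zero (gcd_ne_zero_left hx) (gcd_ne_zero_left hx))]
  intro p
  simp only [factorization_gcd hx (lcm_ne_zero hu hv), factorization_lcm hu hv,
    factorization_lcm (gcd_ne_zero_left hx) (gcd_ne_zero_left hx), factorization_gcd hx hu,
    factorization_gcd hx hv, Finsupp.inf_apply, Finsupp.sup_apply, inf_sup_left, le_refl]

theorem Nat.gcd_finset_lcm_dvd {ι : Type*} {s : Finset ι} {f : ι → ℕ} {x d : ℕ}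
    (h : ∀ a ∈ s, gcd x (f a) ∣ d) : gcd x (s.lcm f) ∣ d := by
  classical
  induction s using Finset.induction with
  | empty => simp
  | insert a s _ ih =>
    rw [lcm_insert]
    exact (gcd_lcm_dvd_lcm_gcd _ _ _).trans <|
      Nat.lcm_dvd (h a (mem_insert_self a s)) (ih fun b hb => h b (mem_insert_of_mem hb))

theorem Nat.gcd_finset_lcm_finset_lcm_dvd {ι κ : Type*} {s : Finset ι} {t : Finset κ}
    {f : ι → ℕ} {g : κ → ℕ} {d : ℕ} (h : ∀ a ∈ s, ∀ b ∈ t, gcd (f a) (g b) ∣ d) :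
    gcd (s.lcm f) (t.lcm g) ∣ d :=
  gcd_finset_lcm_dvd fun b hb => gcd_comm (g b) _ ▸ gcd_finset_lcm_dvd fun a ha =>
    gcd_comm (f a) (g b) ▸ h a ha b hb

theorem Finset.exists_card_eq_two_pair_union_eq {α : Type*} [DecidableEq α] {A B : Finset α}
    {i j : α} (hA : #A = 2) (hB : #B = 2) (hi : i ∈ A) (hj : j ∈ B) :
    ∃ C, #C = 2 ∧ {i, j} ∪ C = A ∪ B := by
  obtain ⟨a, ha⟩ := card_eq_one.1 (by rw [card_erase_of_mem hi, hA] : #(A.erase i) = 1)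
  obtain ⟨b, hb⟩ := card_eq_one.1 (by rw [card_erase_of_mem hj, hB] : #(B.erase j) = 1)
  have hA' : A = {i, a} := by rw [← ha, insert_erase hi]
  have hB' : B = {j, b} := by rw [← hb, insert_erase hj]
  subst hA' hB'
  by_cases haB : a ∈ ({j, b} : Finset α)
  · exact ⟨{j, b}, hB, by ext; simp at haB ⊢; grind⟩
  by_cases hbA : b ∈ ({i, a} : Finset α)
  · exact ⟨{i, a}, hA, by ext; simp at hbA ⊢; grind⟩
  have hab : a ≠ b := fun h => haB (by simp [h])
  exact ⟨{a, b}, card_pair hab, by ext; simp; tauto⟩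

theorem gcd_of_lcms_general (k : ℕ) (m : Finset (Fin k) → ℕ)
    (hcons : ∀ A₁ B₁ A₂ B₂ : Finset (Fin k),
      A₁.card = 2 → B₁.card = 2 → A₂.card = 2 → B₂.card = 2 →
      A₁ ∪ B₁ = A₂ ∪ B₂ → Nat.gcd (m A₁) (m B₁) = Nat.gcd (m A₂) (m B₂)) :
    ∀ i j : Fin k, i < j →
      Nat.gcd
        ((Finset.univ.filter (fun A : Finset (Fin k) => A.card = 2 ∧ i ∈ A)).lcm m)
        ((Finset.univ.filter (fun A : Finset (Fin k) => A.card = 2 ∧ j ∈ A)).lcm m) =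
      m {i, j} := by
  intro i j hij
  have hpair : #{i, j} = 2 := card_pair hij.ne
  apply Nat.dvd_antisymm
  · refine Nat.gcd_finset_lcm_finset_lcm_dvd fun A hA B hB => ?_
    simp only [mem_filter, mem_univ, true_and] at hA hB
    obtain ⟨C, hC, hunion⟩ := exists_card_eq_two_pair_union_eq hA.1 hB.1 hA.2 hB.2
    rw [hcons A B {i, j} C hA.1 hB.1 hpair hC hunion.symm]
    exact Nat.gcd_dvd_left _ _
  · exact Nat.dvd_gcd (dvd_lcm (by simp [hpair])) (dvd_lcm (by simp [hpair]))

theorem gcd_of_lcms (k : ℕ) (hk : 2 ≤ k) (m : Finset (Fin k) → ℕ)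
    (hpos : ∀ A : Finset (Fin k), A.card = 2 → 0 < m A)
    (hcons : ∀ A₁ B₁ A₂ B₂ : Finset (Fin k),
      A₁.card = 2 → B₁.card = 2 → A₂.card = 2 → B₂.card = 2 →
      A₁ ∪ B₁ = A₂ ∪ B₂ → Nat.gcd (m A₁) (m B₁) = Nat.gcd (m A₂) (m B₂)) :
    ∀ i j : Fin k, i < j →
      Nat.gcd
        ((Finset.univ.filter (fun A : Finset (Fin k) => A.card = 2 ∧ i ∈ A)).lcm m)
        ((Finset.univ.filter (fun A : Finset (Fin k) => A.card = 2 ∧ j ∈ A)).lcm m) =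
      m {i, j} :=
  gcd_of_lcms_general k m hcons
end

section
/- Let k ≥ 2. A tuple m = (m_{ij})_{1 ≤ i < j ≤ k} of positive integers arises as the tuple of pairwise greatest common divisors of some positive integers t₁, …, t_k (i.e., m_{ij} = gcd(t_i, t_j) for all i < j) if and only if m satisfies the consistency condition: gcd(m_{A₁}, m_{B₁}) = gcd(m_{A₂}, m_{B₂}) for all two-element subsets A₁, B₁, A₂, B₂ of {1,…,k} with A₁ ∪ B₁ = A₂ ∪ B₂ (where m_A = m_{ij} for A = {i, j}). -/
open Finset

lemma nat_gcd_lcm_distrib (a b c : ℕ) (ha : a ≠ 0) (hb : b ≠ 0) (hc : c ≠ 0) :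
    Nat.gcd a (Nat.lcm b c) = Nat.lcm (Nat.gcd a b) (Nat.gcd a c) := by
  have hbc : Nat.lcm b c ≠ 0 := Nat.lcm_ne_zero hb hc
  have hab : Nat.gcd a b ≠ 0 :=
    Nat.pos_iff_ne_zero.mp (Nat.gcd_pos_of_pos_left b (Nat.pos_of_ne_zero ha))
  have hac : Nat.gcd a c ≠ 0 :=
    Nat.pos_iff_ne_zero.mp (Nat.gcd_pos_of_pos_left c (Nat.pos_of_ne_zero ha))
  apply Nat.eq_of_factorization_eq
  · exact Nat.pos_iff_ne_zero.mp (Nat.gcd_pos_of_pos_left _ (Nat.pos_of_ne_zero ha))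
  · exact Nat.lcm_ne_zero hab hac
  intro p
  rw [Nat.factorization_gcd ha hbc, Nat.factorization_lcm hb hc,
    Nat.factorization_lcm hab hac, Nat.factorization_gcd ha hb, Nat.factorization_gcd ha hc]
  simp only [Finsupp.inf_apply, Finsupp.sup_apply]
  exact inf_sup_left _ _ _

lemma nat_gcd_finset_lcm {α : Type*} [DecidableEq α] (s : Finset α) (f : α → ℕ) (a : ℕ)
    (ha : a ≠ 0) (hf : ∀ x ∈ s, f x ≠ 0) :
    Nat.gcd a (s.lcm f) = s.lcm fun x => Nat.gcd a (f x) := by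
  induction s using Finset.induction with
  | empty => simp
  | @insert x s hx ih =>
    have hfx : f x ≠ 0 := hf x (mem_insert_self x s)
    have hfs : ∀ y ∈ s, f y ≠ 0 := fun y hy => hf y (mem_insert_of_mem hy)
    have hslcm : s.lcm f ≠ 0 := by
      simp only [ne_eq, Finset.lcm_eq_zero_iff]
      intro h
      obtain ⟨y, hy, hy0⟩ := h
      exact hfs y hy hy0
    rw [Finset.lcm_insert, Finset.lcm_insert]
    have : lcm (f x) (s.lcm f) = Nat.lcm (f x) (s.lcm f) := rfl
    rw [this, nat_gcd_lcm_distrib a _ _ ha hfx hslcm, ih hfs]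
    rfl

theorem pairwise_gcd_characterization (k : ℕ) (hk : 2 ≤ k)
    (m : Finset (Fin k) → ℕ)
    (hpos : ∀ A : Finset (Fin k), A.card = 2 → 0 < m A) :
    (∃ t : Fin k → ℕ, (∀ i, 0 < t i) ∧
        ∀ i j : Fin k, i < j → m {i, j} = Nat.gcd (t i) (t j)) ↔
    (∀ A₁ B₁ A₂ B₂ : Finset (Fin k),
        A₁.card = 2 → B₁.card = 2 → A₂.card = 2 → B₂.card = 2 →
        A₁ ∪ B₁ = A₂ ∪ B₂ → Nat.gcd (m A₁) (m B₁) = Nat.gcd (m A₂) (m B₂)) := by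
  constructor
  · rintro ⟨t, htpos, ht⟩ A₁ B₁ A₂ B₂ h1 h2 h3 h4 hU
    have key : ∀ a b : Fin k, a ≠ b → m {a, b} = Nat.gcd (t a) (t b) := by
      intro a b hab
      rcases lt_or_gt_of_ne hab with h | h
      · exact ht a b h
      · rw [Finset.pair_comm, ht b a h, Nat.gcd_comm]
    have hg : ∀ A : Finset (Fin k), A.card = 2 → m A = A.gcd t := by
      intro A hA
      obtain ⟨a, b, hab, rfl⟩ := Finset.card_eq_two.mp hA
      rw [key a b hab]
      rw [Finset.gcd_insert, Finset.gcd_singleton, normalize_eq]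
      rfl
    have huniv : ∀ A B : Finset (Fin k), A.card = 2 → B.card = 2 →
        Nat.gcd (m A) (m B) = (A ∪ B).gcd t := by
      intro A B hA hB
      rw [hg A hA, hg B hB, Finset.gcd_union]
      rfl
    rw [huniv A₁ B₁ h1 h2, huniv A₂ B₂ h3 h4, hU]
  · intro hcons
    set t : Fin k → ℕ := fun i => (Finset.univ.erase i).lcm (fun l => m {i, l}) with ht
    have hcard : ∀ (a b : Fin k), a ≠ b → ({a, b} : Finset (Fin k)).card = 2 := by
      intro a b hab
      exact Finset.card_pair hab
    have hmne : ∀ (a b : Fin k), a ≠ b → m {a, b} ≠ 0 := by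
      intro a b hab
      exact Nat.pos_iff_ne_zero.mp (hpos _ (hcard a b hab))
    have htne : ∀ i, t i ≠ 0 := by
      intro i
      simp only [ht, ne_eq, Finset.lcm_eq_zero_iff]
      intro h
      obtain ⟨y, hy, hy0⟩ := h
      exact hmne i y (Ne.symm (Finset.ne_of_mem_erase hy)) hy0
    refine ⟨t, fun i => Nat.pos_of_ne_zero (htne i), ?_⟩
    intro i j hij
    have hijne : i ≠ j := ne_of_lt hij
    apply Nat.dvd_antisymm
    · -- m {i,j} ∣ gcd (t i) (t j)
      apply Nat.dvd_gcd
      · exact Finset.dvd_lcm (Finset.mem_erase.mpr ⟨hijne.symm, Finset.mem_univ j⟩)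
      · have : ({i, j} : Finset (Fin k)) = {j, i} := Finset.pair_comm i j
        rw [this]
        exact Finset.dvd_lcm (Finset.mem_erase.mpr ⟨hijne, Finset.mem_univ i⟩)
    · -- gcd (t i) (t j) ∣ m {i,j}
      have step1 : Nat.gcd (t i) (t j) =
          (Finset.univ.erase i).lcm (fun l => Nat.gcd (t j) (m {i, l})) := by
        rw [Nat.gcd_comm]
        exact nat_gcd_finset_lcm _ _ _ (htne j)
          (fun x hx => hmne i x (Ne.symm (Finset.ne_of_mem_erase hx)))
      rw [step1]
      apply Finset.lcm_dvd
      intro l hl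
      have hli : l ≠ i := Finset.ne_of_mem_erase hl
      have step2 : Nat.gcd (t j) (m {i, l}) =
          (Finset.univ.erase j).lcm (fun l' => Nat.gcd (m {i, l}) (m {j, l'})) := by
        rw [Nat.gcd_comm]
        conv_lhs => rw [ht]
        exact nat_gcd_finset_lcm _ _ _ (hmne i l (Ne.symm hli))
          (fun x hx => hmne j x (Ne.symm (Finset.ne_of_mem_erase hx)))
      rw [step2]
      apply Finset.lcm_dvd
      intro l' hl'
      have hl'j : l' ≠ j := Finset.ne_of_mem_erase hl'
      -- show gcd (m {i,l}) (m {j,l'}) ∣ m {i,j}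
      by_cases hlj : l = j
      · subst hlj
        exact Nat.gcd_dvd_left _ _
      · by_cases hl'i : l' = i
        · subst hl'i
          rw [Finset.pair_comm j l']
          exact Nat.gcd_dvd_right _ _
        · by_cases hll' : l = l'
          · subst hll'
            have := hcons {i, l} {j, l} {i, j} {i, l}
              (hcard i l (Ne.symm hli)) (hcard j l (Ne.symm hlj))
              (hcard i j hijne) (hcard i l (Ne.symm hli))
              (by ext x; simp [Finset.mem_union, Finset.mem_insert]; tauto)
            rw [this]
            exact Nat.gcd_dvd_left _ _
          · have := hcons {i, l} {j, l'} {i, j} {l, l'}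
              (hcard i l (Ne.symm hli)) (hcard j l' (Ne.symm hl'j))
              (hcard i j hijne) (hcard l l' hll')
              (by ext x; simp [Finset.mem_union, Finset.mem_insert]; tauto)
            rw [this]
            exact Nat.gcd_dvd_left _ _
end

section
/- Let k ≥ 2 and let m = (m_A : A ⊆ {1,…,k}, |A| = 2) be a tuple of positive integers satisfying the consistency condition. For S ⊆ {1,…,k} with |S| ≥ 2, set m_S := gcd{m_{{i,j}} : i, j ∈ S, i ≠ j}. Then lcm{m_A : A ⊆ {1,…,k}, |A| = 2} · ∏_{i odd, 3 ≤ i ≤ k} ∏_{B ⊆ {1,…,k}, |B| = i} m_B^(i−1) = ∏_{j even, 2 ≤ j ≤ k} ∏_{C ⊆ {1,…,k}, |C| = j} m_C^(j−1). -/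
/-!
Fix a prime `p` and write `v` for the `p`-adic valuation. Consistency forces
`v m_{ij} = min (x i) (x j)` with `x i = max_{j ≠ i} v m_{ij}`, so `v m_S = min_{i ∈ S} x i` and
`v (lcm m) > t` iff at least two `x i` exceed `t`. Counting both sides level by level over the sets
`U_t = {i | t < x i}`, the identity becomes `∑_{S ⊆ U, 2 ≤ |S|} (-1)^|S| (|S| - 1) = [2 ≤ |U|]`,
which follows from `∑ (-1)^n C(u, n) = [u = 0]` and `∑ (-1)^n n C(u, n) = -[u = 1]`.
-/

open Finset

theorem Int.alternating_sum_range_mul_choose (u : ℕ) :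
    ∑ n ∈ Finset.range (u + 1), (-1 : ℤ) ^ n * n * u.choose n = if u = 1 then -1 else 0 := by
  cases u with
  | zero => simp
  | succ u =>
    have hterm (n : ℕ) : (-1 : ℤ) ^ (n + 1) * (n + 1 : ℕ) * (u + 1).choose (n + 1)
        = -(u + 1) * ((-1) ^ n * u.choose n) := by
      have h : ((u + 1) * u.choose n : ℤ) = (u + 1).choose (n + 1) * (n + 1) := by
        exact_mod_cast Nat.add_one_mul_choose_eq u n
      push_cast
      linear_combination (-1 : ℤ) ^ n * h
    simp only [Finset.sum_range_succ' _ (u + 1), hterm, ← Finset.mul_sum,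
      Int.alternating_sum_range_choose]
    split_ifs <;> simp_all

theorem Int.alternating_sum_range_choose_mul_sub_one (u : ℕ) :
    ∑ n ∈ Finset.range (u + 1), (u.choose n : ℤ) * ((-1) ^ n * (n - 1))
      = (if 2 ≤ u then 1 else 0) - 1 := by
  have hterm (n : ℕ) : (u.choose n : ℤ) * ((-1) ^ n * (n - 1))
      = (-1) ^ n * n * u.choose n - (-1) ^ n * u.choose n := by ring
  simp only [hterm, Finset.sum_sub_distrib, Int.alternating_sum_range_mul_choose,
    Int.alternating_sum_range_choose]
  split_ifs <;> omega

theorem Int.cast_ite_even_sub_cast_ite_odd (n : ℕ) :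
    ((if n % 2 = 0 ∧ 2 ≤ n then n - 1 else 0 : ℕ) : ℤ)
      - (if n % 2 = 1 ∧ 3 ≤ n then n - 1 else 0 : ℕ)
      = (-1) ^ n * (n - 1) + if n = 0 then 1 else 0 := by
  rcases Nat.mod_two_eq_zero_or_one n with h | h
  · rw [(Nat.even_iff.mpr h).neg_one_pow]
    split_ifs <;> omega
  · rw [(Nat.odd_iff.mpr h).neg_one_pow]
    split_ifs <;> omega

theorem Finset.add_sum_powerset_odd_eq_sum_powerset_even {ι : Type*} (U : Finset ι) :
    (if 2 ≤ #U then 1 else 0) + ∑ S ∈ U.powerset with #S % 2 = 1 ∧ 3 ≤ #S, (#S - 1)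
      = ∑ S ∈ U.powerset with #S % 2 = 0 ∧ 2 ≤ #S, (#S - 1) := by
  rw [sum_filter, sum_filter,
    sum_powerset_apply_card (fun n => if n % 2 = 1 ∧ 3 ≤ n then n - 1 else 0),
    sum_powerset_apply_card (fun n => if n % 2 = 0 ∧ 2 ≤ n then n - 1 else 0),
    ← Nat.cast_inj (R := ℤ), Nat.cast_add, Nat.cast_sum, Nat.cast_sum, eq_comm,
    ← sub_eq_iff_eq_add, ← sum_sub_distrib]
  simp only [smul_eq_mul, Nat.cast_mul, ← mul_sub, Int.cast_ite_even_sub_cast_ite_odd, mul_add,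
    sum_add_distrib, Int.alternating_sum_range_choose_mul_sub_one]
  simp

theorem Finset.sum_range_ite_lt {N a : ℕ} (h : a ≤ N) :
    ∑ t ∈ range N, (if t < a then 1 else 0) = a := by
  rw [sum_boole, Nat.cast_id]
  convert card_range a using 2
  ext t
  simp only [mem_filter, mem_range]
  omega

section Thresholds

variable {ι : Type*} [Fintype ι] [DecidableEq ι]

theorem Finset.sum_filter_ite_subset {M : Type*} [AddCommMonoid M] (P : Finset ι → Prop)
    [DecidablePred P] (U : Finset ι) (f : Finset ι → M) :
    ∑ S with P S, (if S ⊆ U then f S else 0) = ∑ S ∈ U.powerset with P S, f S := by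
  rw [← sum_filter, filter_filter]
  congr 1
  ext S
  simp only [mem_filter, mem_univ, true_and, mem_powerset]
  tauto

theorem add_sum_odd_eq_sum_even_of_thresholds (x : ι → ℕ) (L : ℕ) (F : Finset ι → ℕ)
    (hL : ∀ t, t < L ↔ 2 ≤ #{i | t < x i})
    (hF : ∀ S : Finset ι, 2 ≤ #S → ∀ t, t < F S ↔ S ⊆ ({i | t < x i} : Finset ι)) :
    L + ∑ S with #S % 2 = 1 ∧ 3 ≤ #S, (#S - 1) * F S
      = ∑ S with #S % 2 = 0 ∧ 2 ≤ #S, (#S - 1) * F S := by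
  set N := univ.sup x
  have hN (t : ℕ) (ht : N ≤ t) : ({i | t < x i} : Finset ι) = ∅ :=
    filter_false_of_mem fun i _ => (le_sup (mem_univ i)).trans ht |>.not_gt
  have hLN : L ≤ N := by
    by_contra! h
    simpa [hN N le_rfl] using (hL N).mp h
  have hFN (S : Finset ι) (hS : 2 ≤ #S) : F S ≤ N := by
    by_contra! h
    have hSN := (hF S hS N).mp h
    rw [hN N le_rfl, subset_empty] at hSN
    simp [hSN] at hS
  have layers (P : Finset ι → Prop) [DecidablePred P] (hP : ∀ S, P S → 2 ≤ #S) :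
      ∑ S with P S, (#S - 1) * F S
        = ∑ t ∈ range N, ∑ S ∈ ({i | t < x i} : Finset ι).powerset with P S, (#S - 1) := by
    simp only [← sum_filter_ite_subset]
    rw [sum_comm]
    refine sum_congr rfl fun S hS => ?_
    have hS := hP S (mem_filter.mp hS).2
    rw [← sum_range_ite_lt (hFN S hS), mul_sum]
    simp only [mul_ite, mul_one, mul_zero, hF S hS]
  rw [layers _ fun S h => by omega, layers _ fun S h => h.2, ← sum_range_ite_lt hLN,
    ← sum_add_distrib]
  refine sum_congr rfl fun t _ => ?_
  simp only [hL]
  exact add_sum_powerset_odd_eq_sum_powerset_even _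

theorem Nat.factorization_gcd_apply {a b : ℕ} (ha : a ≠ 0) (hb : b ≠ 0) (p : ℕ) :
    (a.gcd b).factorization p = min (a.factorization p) (b.factorization p) := by
  rw [Nat.factorization_gcd ha hb, Finsupp.inf_apply]

theorem Nat.factorization_prod_pow_apply {α : Type*} {s : Finset α} {f e : α → ℕ}
    (hf : ∀ a ∈ s, f a ≠ 0) (p : ℕ) :
    (∏ a ∈ s, f a ^ e a).factorization p = ∑ a ∈ s, e a * (f a).factorization p := by
  simp [Nat.factorization_prod fun a ha => pow_ne_zero _ (hf a ha), Nat.factorization_pow]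

theorem Finset.factorization_gcd {ι : Type*} {f : ι → ℕ} {s : Finset ι} (hs : s.Nonempty)
    (hf : ∀ i ∈ s, f i ≠ 0) (p : ℕ) :
    (s.gcd f).factorization p = s.inf' hs fun i => (f i).factorization p := by
  induction hs using Nonempty.cons_induction with
  | singleton a => simp
  | cons a s ha hs ih =>
    have hf' : ∀ i ∈ s, f i ≠ 0 := fun i hi => hf i (mem_cons_of_mem hi)
    have hgcd : s.gcd f ≠ 0 := fun h => by
      obtain ⟨i, hi⟩ := hs
      exact hf' i hi (gcd_eq_zero_iff.mp h i hi)
    rw [gcd_cons, inf'_cons hs, ← ih hf']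
    exact Nat.factorization_gcd_apply (hf a (mem_cons_self a s)) hgcd p

section Pairs

variable {ι α : Type*} [Fintype ι] [DecidableEq ι] [LinearOrder α]

theorem exists_eq_min_of_min_eq_of_union_eq [OrderBot α] (E : Finset ι → α)
    (hE : ∀ A₁ B₁ A₂ B₂ : Finset ι, #A₁ = 2 → #B₁ = 2 → #A₂ = 2 → #B₂ = 2 →
      A₁ ∪ B₁ = A₂ ∪ B₂ → min (E A₁) (E B₁) = min (E A₂) (E B₂)) :
    ∃ x : ι → α, ∀ i j, i ≠ j → E {i, j} = min (x i) (x j) := by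
  refine ⟨fun i => (univ.erase i).sup fun j => E {i, j}, fun i j hij => le_antisymm ?_ ?_⟩
  · refine le_min (le_sup (f := fun l => E {i, l}) (mem_erase.mpr ⟨hij.symm, mem_univ j⟩)) ?_
    rw [pair_comm]
    exact le_sup (f := fun l => E {j, l}) (mem_erase.mpr ⟨hij, mem_univ i⟩)
  obtain ⟨a, ha, hxa⟩ := exists_mem_eq_sup _ ⟨j, mem_erase.mpr ⟨hij.symm, mem_univ j⟩⟩
    fun l => E {i, l}
  obtain ⟨b, hb, hxb⟩ := exists_mem_eq_sup _ ⟨i, mem_erase.mpr ⟨hij, mem_univ i⟩⟩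
    fun l => E {j, l}
  have hai := (mem_erase.mp ha).1
  have hbj := (mem_erase.mp hb).1
  simp only [hxa, hxb]
  by_cases haj : a = j
  · exact haj ▸ min_le_left _ _
  by_cases hbi : b = i
  · subst hbi
    rw [pair_comm j]
    exact min_le_right _ _
  -- `{i, a} ∪ {j, b}` is also the union of `{i, j}` with a second pair.
  by_cases hab : a = b
  · subst hab
    rw [hE {i, a} {j, a} {i, j} {j, a} (card_pair hai.symm) (card_pair hbj.symm) (card_pair hij)
      (card_pair hbj.symm) (by ext; simp; tauto)]
    exact min_le_left _ _
  · rw [hE {i, a} {j, b} {i, j} {a, b} (card_pair hai.symm) (card_pair hbj.symm) (card_pair hij)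
      (card_pair hab) (by ext; simp; tauto)]
    exact min_le_left _ _

variable {E : Finset ι → α} {x : ι → α}

theorem exists_card_eq_two_lt_iff (hx : ∀ i j, i ≠ j → E {i, j} = min (x i) (x j)) (t : α) :
    (∃ A ∈ ({A | #A = 2} : Finset (Finset ι)), t < E A) ↔ 2 ≤ #{i | t < x i} := by
  simp only [mem_filter, mem_univ, true_and]
  constructor
  · rintro ⟨A, hA, ht⟩
    obtain ⟨i, j, hij, rfl⟩ := card_eq_two.mp hA
    rw [hx i j hij, lt_min_iff] at ht
    exact card_pair hij ▸ card_le_card (by simp [insert_subset_iff, ht])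
  · intro h
    obtain ⟨i, hi, j, hj, hij⟩ := one_lt_card.mp h
    refine ⟨{i, j}, card_pair hij, ?_⟩
    simp_all

theorem forall_mem_powersetCard_two_lt_iff (hx : ∀ i j, i ≠ j → E {i, j} = min (x i) (x j))
    {S : Finset ι} (hS : 2 ≤ #S) (t : α) :
    (∀ A ∈ powersetCard 2 S, t < E A) ↔ S ⊆ ({i | t < x i} : Finset ι) := by
  constructor
  · intro h i hi
    obtain ⟨j, hj, hji⟩ := exists_mem_ne hS i
    have hij := h {i, j} (mem_powersetCard.mpr ⟨insert_subset hi (singleton_subset_iff.mpr hj),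
      card_pair hji.symm⟩)
    rw [hx i j hji.symm, lt_min_iff] at hij
    simpa using hij.1
  · intro h A hA
    obtain ⟨hAS, hA2⟩ := mem_powersetCard.mp hA
    obtain ⟨i, j, hij, rfl⟩ := card_eq_two.mp hA2
    have hijt := hAS.trans h
    simp only [insert_subset_iff, singleton_subset_iff, mem_filter, mem_univ, true_and] at hijt
    rw [hx i j hij]
    exact lt_min hijt.1 hijt.2

end Pairs

theorem lcm_identity_for_consistent_tuples_general (k : ℕ)
    (m : Finset (Fin k) → ℕ)
    (hpos : ∀ A : Finset (Fin k), A.card = 2 → 0 < m A)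
    (hcons : ∀ A₁ B₁ A₂ B₂ : Finset (Fin k),
      A₁.card = 2 → B₁.card = 2 → A₂.card = 2 → B₂.card = 2 →
      A₁ ∪ B₁ = A₂ ∪ B₂ → Nat.gcd (m A₁) (m B₁) = Nat.gcd (m A₂) (m B₂))
    (mS : Finset (Fin k) → ℕ)
    (hmS : ∀ S : Finset (Fin k),
      mS S = (S.powerset.filter (fun A => A.card = 2)).gcd m) :
    ((Finset.univ.filter (fun A : Finset (Fin k) => A.card = 2)).lcm m) *
      ∏ B ∈ Finset.univ.filter
        (fun B : Finset (Fin k) => B.card % 2 = 1 ∧ 3 ≤ B.card),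
          mS B ^ (B.card - 1) =
    ∏ C ∈ Finset.univ.filter
        (fun C : Finset (Fin k) => C.card % 2 = 0 ∧ 2 ≤ C.card),
          mS C ^ (C.card - 1) := by
  have hm0 {A : Finset (Fin k)} (hA : #A = 2) : m A ≠ 0 := (hpos A hA).ne'
  have hmS' (S : Finset (Fin k)) : mS S = (powersetCard 2 S).gcd m := by
    rw [hmS, powersetCard_eq_filter]
  have hmS0 {S : Finset (Fin k)} (hS : 2 ≤ #S) : mS S ≠ 0 := by
    obtain ⟨A, hA⟩ := powersetCard_nonempty.mpr hS
    exact hmS' S ▸ ne_zero_of_dvd_ne_zero (hm0 (mem_powersetCard.mp hA).2) (gcd_dvd hA)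
  have hlcm0 : (univ.filter fun A : Finset (Fin k) => #A = 2).lcm m ≠ 0 :=
    Finset.lcm_ne_zero_iff.mpr fun A hA => hm0 (mem_filter.mp hA).2
  have hodd0 : ∏ B ∈ univ.filter (fun B : Finset (Fin k) => #B % 2 = 1 ∧ 3 ≤ #B),
      mS B ^ (#B - 1) ≠ 0 := prod_ne_zero_iff.mpr fun B hB => pow_ne_zero _ (hmS0 (by grind))
  refine Nat.eq_of_factorization_eq (mul_ne_zero hlcm0 hodd0)
    (prod_ne_zero_iff.mpr fun C hC => pow_ne_zero _ (hmS0 (by grind))) fun p => ?_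
  rw [Nat.factorization_mul hlcm0 hodd0, Finsupp.add_apply,
    Nat.factorization_prod_pow_apply fun B hB => hmS0 (by grind),
    Nat.factorization_prod_pow_apply fun C hC => hmS0 (by grind)]
  set v : Finset (Fin k) → ℕ := fun A => (m A).factorization p
  obtain ⟨x, hx⟩ := exists_eq_min_of_min_eq_of_union_eq v fun A₁ B₁ A₂ B₂ h₁ h₂ h₃ h₄ hU => by
    rw [← Nat.factorization_gcd_apply (hm0 h₁) (hm0 h₂),
      ← Nat.factorization_gcd_apply (hm0 h₃) (hm0 h₄), hcons A₁ B₁ A₂ B₂ h₁ h₂ h₃ h₄ hU]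
  refine add_sum_odd_eq_sum_even_of_thresholds x _ _ (fun t => ?_) fun S hS t => ?_
  · rw [Finset.factorization_lcm (fun A hA => hm0 (mem_filter.mp hA).2), Finset.lt_sup_iff]
    exact exists_card_eq_two_lt_iff hx t
  · rw [hmS', Finset.factorization_gcd (powersetCard_nonempty.mpr hS)
      (fun A hA => hm0 (mem_powersetCard.mp hA).2), lt_inf'_iff]
    exact forall_mem_powersetCard_two_lt_iff hx hS t

theorem lcm_identity_for_consistent_tuples (k : ℕ) (hk : 2 ≤ k)
    (m : Finset (Fin k) → ℕ)
    (hpos : ∀ A : Finset (Fin k), A.card = 2 → 0 < m A)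
    (hcons : ∀ A₁ B₁ A₂ B₂ : Finset (Fin k),
      A₁.card = 2 → B₁.card = 2 → A₂.card = 2 → B₂.card = 2 →
      A₁ ∪ B₁ = A₂ ∪ B₂ → Nat.gcd (m A₁) (m B₁) = Nat.gcd (m A₂) (m B₂))
    (mS : Finset (Fin k) → ℕ)
    (hmS : ∀ S : Finset (Fin k),
      mS S = (S.powerset.filter (fun A => A.card = 2)).gcd m) :
    ((Finset.univ.filter (fun A : Finset (Fin k) => A.card = 2)).lcm m) *
      ∏ B ∈ Finset.univ.filter
        (fun B : Finset (Fin k) => B.card % 2 = 1 ∧ 3 ≤ B.card),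
          mS B ^ (B.card - 1) =
    ∏ C ∈ Finset.univ.filter
        (fun C : Finset (Fin k) => C.card % 2 = 0 ∧ 2 ≤ C.card),
          mS C ^ (C.card - 1) :=
  lcm_identity_for_consistent_tuples_general k m hpos hcons mS hmS
end Thresholds
end

section
/- Let k ≥ 2 and let p be a prime. The number of tuples m = (m_A : A ⊆ {1,…,k}, |A| = 2) of positive integers that satisfy the consistency condition and have lcm{m_A : A ⊆ {1,…,k}, |A| = 2} = p is exactly 2^k − k − 1. -/
open Finset

private lemma card_filter_two_le_aux (k : ℕ) :
    (univ.filter fun T : Finset (Fin k) => 2 ≤ T.card).card = 2 ^ k - k - 1 := by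
  have hneg : (univ.filter fun T : Finset (Fin k) => ¬ 2 ≤ T.card)
      = insert (∅ : Finset (Fin k)) (univ.image fun a => ({a} : Finset (Fin k))) := by
    ext T
    simp only [mem_filter, mem_univ, true_and, mem_insert, mem_image, not_le]
    constructor
    · intro h
      have h01 : T.card = 0 ∨ T.card = 1 := by omega
      rcases h01 with h0 | h1
      · exact Or.inl (Finset.card_eq_zero.mp h0)
      · rcases Finset.card_eq_one.mp h1 with ⟨a, ha⟩
        exact Or.inr ⟨a, ha.symm⟩
    · rintro (rfl | ⟨a, -, rfl⟩) <;> simp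
  have hnegcard : (univ.filter fun T : Finset (Fin k) => ¬ 2 ≤ T.card).card = k + 1 := by
    rw [hneg, Finset.card_insert_of_notMem (by
        simp only [Finset.mem_image, Finset.mem_univ, true_and, not_exists]
        exact fun x => Finset.singleton_ne_empty x),
      Finset.card_image_of_injective _ (fun a b h => by
        simpa using (Finset.singleton_injective h))]
    simp [add_comm]
  have htot := Finset.card_filter_add_card_filter_not
    (s := (univ : Finset (Finset (Fin k)))) (p := fun T => 2 ≤ T.card)
  rw [hnegcard, Finset.card_univ, Fintype.card_finset, Fintype.card_fin] at htot
  omega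

theorem count_consistent_tuples_with_prime_lcm (k : ℕ) (hk : 2 ≤ k)
    (p : ℕ) (hp : Nat.Prime p) :
    Nat.card {m : {A : Finset (Fin k) // A.card = 2} → ℕ //
      (∀ A, 0 < m A) ∧
      (∀ A₁ B₁ A₂ B₂ : {A : Finset (Fin k) // A.card = 2},
        (A₁ : Finset (Fin k)) ∪ (B₁ : Finset (Fin k)) =
          (A₂ : Finset (Fin k)) ∪ (B₂ : Finset (Fin k)) →
        Nat.gcd (m A₁) (m B₁) = Nat.gcd (m A₂) (m B₂)) ∧
      Finset.univ.lcm m = p} = 2 ^ k - k - 1 := by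
  classical
  set I := {A : Finset (Fin k) // A.card = 2} with hI
  -- the candidate map from sets T with 2 ≤ |T|
  set g : Finset (Fin k) → I → ℕ := fun T A => if (A : Finset (Fin k)) ⊆ T then p else 1
    with hg
  have hgcd : ∀ T (A B : I),
      Nat.gcd (g T A) (g T B) = if (A : Finset (Fin k)) ∪ B ⊆ T then p else 1 := by
    intro T A B
    by_cases hA : (A : Finset (Fin k)) ⊆ T <;> by_cases hB : (B : Finset (Fin k)) ⊆ T <;>
      simp [hg, hA, hB, Finset.union_subset_iff, Nat.gcd_self]
  have hf : ∀ T : Finset (Fin k), 2 ≤ T.card →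
      (∀ A, 0 < g T A) ∧
      (∀ A₁ B₁ A₂ B₂ : I,
        (A₁ : Finset (Fin k)) ∪ (B₁ : Finset (Fin k)) =
          (A₂ : Finset (Fin k)) ∪ (B₂ : Finset (Fin k)) →
        Nat.gcd (g T A₁) (g T B₁) = Nat.gcd (g T A₂) (g T B₂)) ∧
      Finset.univ.lcm (g T) = p := by
    intro T hT
    refine ⟨?_, ?_, ?_⟩
    · intro A
      by_cases hA : (A : Finset (Fin k)) ⊆ T <;> simp [hg, hA, hp.pos]
    · intro A₁ B₁ A₂ B₂ h
      rw [hgcd, hgcd, h]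
    · obtain ⟨A0, hA0sub, hA0card⟩ := Finset.exists_subset_card_eq hT
      apply Nat.dvd_antisymm
      · apply Finset.lcm_dvd
        intro A _
        by_cases hA : (A : Finset (Fin k)) ⊆ T <;> simp [hg, hA]
      · have h1 : g T ⟨A0, hA0card⟩ = p := by simp [hg, hA0sub]
        calc p = g T ⟨A0, hA0card⟩ := h1.symm
          _ ∣ _ := Finset.dvd_lcm (Finset.mem_univ _)
  set f : {T : Finset (Fin k) // 2 ≤ T.card} →
      {m : I → ℕ //
      (∀ A, 0 < m A) ∧
      (∀ A₁ B₁ A₂ B₂ : I,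
        (A₁ : Finset (Fin k)) ∪ (B₁ : Finset (Fin k)) =
          (A₂ : Finset (Fin k)) ∪ (B₂ : Finset (Fin k)) →
        Nat.gcd (m A₁) (m B₁) = Nat.gcd (m A₂) (m B₂)) ∧
      Finset.univ.lcm m = p} := fun T => ⟨g T.1, hf T.1 T.2⟩ with hfdef
  have hbij : Function.Bijective f := by
    constructor
    · -- injective
      intro T1 T2 h
      have hval : ∀ A : I, g T1.1 A = g T2.1 A := fun A =>
        congrFun (congrArg Subtype.val h) A
      have key : ∀ T1' T2' : {T : Finset (Fin k) // 2 ≤ T.card},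
          (∀ A : I, g T1'.1 A = g T2'.1 A) → ∀ a ∈ T1'.1, a ∈ T2'.1 := by
        intro T1' T2' hv a ha
        obtain ⟨b, hb, hba⟩ := Finset.exists_mem_ne
          (lt_of_lt_of_le one_lt_two T1'.2) a
        have hApair : ({a, b} : Finset (Fin k)).card = 2 := by
          rw [Finset.card_pair (Ne.symm hba)]
        have hsub1 : ({a, b} : Finset (Fin k)) ⊆ T1'.1 := by
          intro x hx
          rcases Finset.mem_insert.mp hx with rfl | hx
          · exact ha
          · rwa [Finset.mem_singleton.mp hx]
        have h1 : g T1'.1 ⟨{a, b}, hApair⟩ = p := by simp [hg, hsub1]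
        have h2 : g T2'.1 ⟨{a, b}, hApair⟩ = p := by rw [← hv]; exact h1
        by_cases hsub2 : ({a, b} : Finset (Fin k)) ⊆ T2'.1
        · exact hsub2 (Finset.mem_insert_self a {b})
        · simp only [hg, hsub2, if_false] at h2
          exact absurd h2.symm hp.ne_one
      apply Subtype.ext
      apply Finset.Subset.antisymm
      · exact fun a ha => key T1 T2 hval a ha
      · exact fun a ha => key T2 T1 (fun A => (hval A).symm) a ha
    · -- surjective
      rintro ⟨m, hpos, hcons, hlcm⟩
      have hdvd : ∀ A : I, m A ∣ p := by
        intro A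
        rw [← hlcm]
        exact Finset.dvd_lcm (Finset.mem_univ A)
      -- key lemma: if m A = p and m B = p then every 2-subset C of A ∪ B has m C = p
      have key : ∀ A B : I, m A = p → m B = p → ∀ C : I,
          (C : Finset (Fin k)) ⊆ (A : Finset (Fin k)) ∪ B → m C = p := by
        intro A B hA hB C hC
        set U := (A : Finset (Fin k)) ∪ B with hU
        have hU4 : U.card ≤ 4 := by
          have := Finset.card_union_le (A : Finset (Fin k)) (B : Finset (Fin k))
          rw [A.2, B.2] at this
          rw [← hU] at this
          omega
        have hU2 : 2 ≤ U.card := by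
          have := Finset.card_le_card hC
          rw [C.2] at this; exact this
        have hsd : (U \ (C : Finset (Fin k))).card ≤ 2 := by
          rw [Finset.card_sdiff_of_subset hC, C.2]; omega
        obtain ⟨D, hD1, hD2, hDcard⟩ :=
          Finset.exists_subsuperset_card_eq (Finset.sdiff_subset
            (s := U) (t := (C : Finset (Fin k)))) hsd hU2
        have hCD : (C : Finset (Fin k)) ∪ D = U := by
          apply Finset.Subset.antisymm (Finset.union_subset hC hD2)
          intro x hx
          by_cases hxC : x ∈ (C : Finset (Fin k))
          · exact Finset.mem_union_left _ hxC
          · exact Finset.mem_union_right _ (hD1 (Finset.mem_sdiff.mpr ⟨hx, hxC⟩))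
        have := hcons C ⟨D, hDcard⟩ A B hCD
        rw [hA, hB, Nat.gcd_self] at this
        have hpdvd : p ∣ m C := this ▸ Nat.gcd_dvd_left (m C) (m ⟨D, hDcard⟩)
        exact Nat.dvd_antisymm (hdvd C) hpdvd
      -- the set T
      set T : Finset (Fin k) :=
        univ.filter (fun a => ∃ A : I, m A = p ∧ a ∈ (A : Finset (Fin k))) with hT
      -- some A0 with m A0 = p
      have hex : ∃ A0 : I, m A0 = p := by
        by_contra hno
        push_neg at hno
        have hone : ∀ A : I, m A = 1 := by
          intro A
          rcases (Nat.dvd_prime hp).mp (hdvd A) with h | h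
          · exact h
          · exact absurd h (hno A)
        have : Finset.univ.lcm m ∣ 1 := Finset.lcm_dvd (fun A _ => by rw [hone A])
        rw [hlcm] at this
        exact hp.ne_one (Nat.dvd_one.mp this)
      obtain ⟨A0, hA0⟩ := hex
      have hA0T : (A0 : Finset (Fin k)) ⊆ T := by
        intro a ha
        simp only [hT, Finset.mem_filter, Finset.mem_univ, true_and]
        exact ⟨A0, hA0, ha⟩
      have hTcard : 2 ≤ T.card := by
        calc 2 = (A0 : Finset (Fin k)).card := A0.2.symm
          _ ≤ T.card := Finset.card_le_card hA0T
      refine ⟨⟨T, hTcard⟩, ?_⟩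
      apply Subtype.ext
      funext A
      show g T A = m A
      by_cases hA : (A : Finset (Fin k)) ⊆ T
      · -- m A = p
        obtain ⟨a, b, hab, hAab⟩ := Finset.card_eq_two.mp A.2
        have haT : a ∈ T := hA (by rw [hAab]; exact Finset.mem_insert_self a {b})
        have hbT : b ∈ T := hA (by rw [hAab]; simp)
        simp only [hT, Finset.mem_filter, Finset.mem_univ, true_and] at haT hbT
        obtain ⟨A1, hA1, haA1⟩ := haT
        obtain ⟨B1, hB1, hbB1⟩ := hbT
        have hsub : (A : Finset (Fin k)) ⊆ (A1 : Finset (Fin k)) ∪ B1 := by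
          rw [hAab]
          intro x hx
          rcases Finset.mem_insert.mp hx with rfl | hx
          · exact Finset.mem_union_left _ haA1
          · rw [Finset.mem_singleton.mp hx]
            exact Finset.mem_union_right _ hbB1
        rw [key A1 B1 hA1 hB1 A hsub]
        simp [hg, hA]
      · -- m A = 1
        have : m A ≠ p := by
          intro hmA
          apply hA
          intro a ha
          simp only [hT, Finset.mem_filter, Finset.mem_univ, true_and]
          exact ⟨A, hmA, ha⟩
        rcases (Nat.dvd_prime hp).mp (hdvd A) with h | h
        · simp [hg, hA, h]
        · exact absurd h this
  have hcard := Nat.card_eq_of_bijective f hbij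
  rw [← hcard, Nat.card_eq_fintype_card, Fintype.card_subtype, card_filter_two_le_aux]
end
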